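/- arXiv:2308.08886 — 3 statements merged into one kernel-verified Lean document; each statement's English description precedes it below -/
import Mathlib

section
/- Let ℓ : ℝ^k → ℝ be the multiclass logistic loss ℓ(f) = log(Σ_j exp(f_j)) − ⟨y, f⟩ with y in the probability simplex a one-hot vector, and let q be its second-order Taylor expansion at a point f, i.e. q(v) = ⟨∇ℓ(f), v⟩ + (1/2)⟨v, ∇²ℓ(f) v⟩ where ∇²ℓ(f) = diag(σ(f)) − σ(f)σ(f)^⊤ with σ(f) = softmax(f). Then the convex conjugate of q is q*(α) = (1/2)⟨β, diag(σ(f))^{-1} β⟩ if β^⊤ 1_k = 0, and +∞ otherwise, where β := α − ∇ℓ(f). -/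
/-!
When `∑ σ = 1` the Hessian form is the `σ`-weighted variance `∑ σ_j (v_j - c)²` with
`c = ∑ σ_l v_l`, so it vanishes on constant vectors. Along `v = t • 1` the objective
`⟨β, v⟩ - ½ ⟨v, ∇²ℓ v⟩` is `t ∑ β`, hence the supremum is `⊤` unless `∑ β = 0`. If `∑ β = 0`,
then `⟨β, v⟩ = ⟨β, v - c⟩` and the objective is a sum of the concave quadratics
`β_j w_j - ½ σ_j w_j²` in `w = v - c`, each bounded by `β_j² / (2 σ_j)`; `v = β / σ` has `c = 0`
and attains every bound.
-/

open Finset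

namespace SoftmaxHessian

variable {ι : Type*} [Fintype ι]

/-- `⟨v, (diag σ - σ σᵀ) v⟩`. -/
def form (σ v : ι → ℝ) : ℝ :=
  ∑ j, v j * (σ j * v j - (∑ l, σ l * v l) * σ j)

lemma form_eq_sum_mul_sq {σ : ι → ℝ} (hσ1 : ∑ j, σ j = 1) (v : ι → ℝ) :
    form σ v = ∑ j, σ j * (v j - ∑ l, σ l * v l) ^ 2 := by
  unfold form
  generalize hc : ∑ l, σ l * v l = c
  have hlhs : ∑ j, v j * (σ j * v j - c * σ j) = ∑ j, σ j * v j ^ 2 - c * ∑ j, σ j * v j := by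
    rw [mul_sum, ← sum_sub_distrib]
    exact sum_congr rfl fun j _ => by ring
  have hrhs : ∑ j, σ j * (v j - c) ^ 2 =
      ∑ j, σ j * v j ^ 2 - 2 * c * ∑ j, σ j * v j + c ^ 2 * ∑ j, σ j := by
    rw [mul_sum, mul_sum, ← sum_sub_distrib, ← sum_add_distrib]
    exact sum_congr rfl fun j _ => by ring
  rw [hlhs, hrhs, hc, hσ1]; ring

lemma form_const {σ : ι → ℝ} (hσ1 : ∑ j, σ j = 1) (t : ℝ) : form σ (fun _ => t) = 0 := by
  simp [form_eq_sum_mul_sq hσ1, ← sum_mul, hσ1]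

lemma form_div_self {σ β : ι → ℝ} (hσ : ∀ j, σ j ≠ 0) (hβ : ∑ j, β j = 0) :
    form σ (fun j => β j / σ j) = ∑ j, β j * (β j / σ j) := by
  have hmean : ∑ l, σ l * (β l / σ l) = 0 := by
    simpa only [mul_div_cancel₀ _ (hσ _)] using hβ
  simp only [form, hmean, zero_mul, sub_zero]
  exact sum_congr rfl fun j _ => by rw [mul_div_cancel₀ _ (hσ j), mul_comm]

lemma mul_sub_half_mul_sq_le {s : ℝ} (hs : 0 < s) (b w : ℝ) :
    b * w - 1 / 2 * (s * w ^ 2) ≤ 1 / 2 * (b * (b / s)) := by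
  have h : 1 / 2 * (b * (b / s)) - (b * w - 1 / 2 * (s * w ^ 2)) = (s * w - b) ^ 2 / (2 * s) := by
    field_simp; ring
  linarith [div_nonneg (sq_nonneg (s * w - b)) (by positivity : (0 : ℝ) ≤ 2 * s)]

lemma inner_sub_half_form_le {σ β : ι → ℝ} (hσ : ∀ j, 0 < σ j) (hσ1 : ∑ j, σ j = 1)
    (hβ : ∑ j, β j = 0) (v : ι → ℝ) :
    ∑ j, β j * v j - 1 / 2 * form σ v ≤ 1 / 2 * ∑ j, β j * (β j / σ j) := by
  set c := ∑ l, σ l * v l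
  have hshift : ∑ j, β j * v j = ∑ j, β j * (v j - c) := by
    simp [mul_sub, sum_sub_distrib, ← sum_mul, hβ]
  rw [form_eq_sum_mul_sq hσ1, hshift, mul_sum, mul_sum, ← sum_sub_distrib]
  exact sum_le_sum fun j _ => mul_sub_half_mul_sq_le (hσ j) _ _

lemma inner_sub_half_form_div_self {σ β : ι → ℝ} (hσ : ∀ j, σ j ≠ 0) (hβ : ∑ j, β j = 0) :
    ∑ j, β j * (β j / σ j) - 1 / 2 * form σ (fun j => β j / σ j) =
      1 / 2 * ∑ j, β j * (β j / σ j) := by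
  rw [form_div_self hσ hβ]; ring

end SoftmaxHessian

lemma EReal.iSup_coe_eq_top_of_forall_lt {α : Type*} {F : α → ℝ} (h : ∀ r, ∃ a, r < F a) :
    ⨆ a, (F a : EReal) = ⊤ := by
  refine (EReal.eq_top_iff_forall_lt _).2 fun r => ?_
  obtain ⟨a, ha⟩ := h r
  exact (EReal.coe_lt_coe_iff.2 ha).trans_le (le_iSup (fun a => (F a : EReal)) a)

lemma Real.sum_exp_div_sum_exp {ι : Type*} [Fintype ι] [Nonempty ι] (f : ι → ℝ) :
    ∑ j, Real.exp (f j) / ∑ l, Real.exp (f l) = 1 := by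
  rw [← sum_div, div_self (sum_pos (fun _ _ => Real.exp_pos _) univ_nonempty).ne']

open SoftmaxHessian

theorem stmt2_general (k : ℕ) (f : Fin k → ℝ)
    (σ : Fin k → ℝ)
    (hσ : ∀ j, σ j = Real.exp (f j) / ∑ l, Real.exp (f l))
    (g : Fin k → ℝ)
    (q : (Fin k → ℝ) → ℝ)
    (hq : ∀ v, q v = (∑ j, g j * v j)
        + (1/2) * (∑ j, v j * (σ j * v j - (∑ l, σ l * v l) * σ j)))
    (α : Fin k → ℝ) (β : Fin k → ℝ) (hβ : β = fun j => α j - g j) :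
    (⨆ v : Fin k → ℝ, (((∑ j, α j * v j) - q v : ℝ) : EReal)) =
      if ∑ j, β j = 0 then (((1/2) * ∑ j, β j * (β j / σ j) : ℝ) : EReal) else ⊤ := by
  have hobj : ∀ v, ∑ j, α j * v j - q v = ∑ j, β j * v j - 1 / 2 * form σ v := by
    intro v
    simp only [hq, hβ, form, sub_mul, sum_sub_distrib]
    ring
  simp only [hobj]
  rcases isEmpty_or_nonempty (Fin k) with hk | hk
  · simp [form]
  have hσpos : ∀ j, 0 < σ j := fun j => by rw [hσ j]; positivity
  have hσ1 : ∑ j, σ j = 1 := by simp only [hσ]; exact Real.sum_exp_div_sum_exp f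
  split_ifs with hβ0
  · refine le_antisymm (iSup_le fun v => ?_) (le_iSup_of_le (fun j => β j / σ j) ?_)
    · exact EReal.coe_le_coe_iff.2 (inner_sub_half_form_le hσpos hσ1 hβ0 v)
    · rw [inner_sub_half_form_div_self (fun j => (hσpos j).ne') hβ0]
  · refine EReal.iSup_coe_eq_top_of_forall_lt fun r => ⟨fun _ => (r + 1) / ∑ j, β j, ?_⟩
    simp only [form_const hσ1, ← sum_mul, mul_zero, sub_zero, mul_div_cancel₀ _ hβ0]
    linarith

/-- conjugate of the second-order Taylor model of the logistic loss.
With `σ(f)_j = exp(f_j)/Σ_l exp(f_l)`, `∇ℓ(f) = σ(f) − y` (`y` one-hot),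
`q(v) = ⟨∇ℓ(f), v⟩ + (1/2)⟨v, (diag σ(f) − σ(f)σ(f)ᵀ) v⟩`. Then
`q*(α) = (1/2)⟨β, diag(σ(f))⁻¹ β⟩` if `1ᵀβ = 0`, else `+∞`, where `β = α − ∇ℓ(f)`. -/
theorem stmt2 (k : ℕ) (f y : Fin k → ℝ)
    (hy : ∃ j0, y = fun j => if j = j0 then (1 : ℝ) else 0)
    (σ : Fin k → ℝ)
    (hσ : ∀ j, σ j = Real.exp (f j) / ∑ l, Real.exp (f l))
    (g : Fin k → ℝ) (hg : g = fun j => σ j - y j)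
    (q : (Fin k → ℝ) → ℝ)
    (hq : ∀ v, q v = (∑ j, g j * v j)
        + (1/2) * (∑ j, v j * (σ j * v j - (∑ l, σ l * v l) * σ j)))
    (α : Fin k → ℝ) (β : Fin k → ℝ) (hβ : β = fun j => α j - g j) :
    (⨆ v : Fin k → ℝ, (((∑ j, α j * v j) - q v : ℝ) : EReal)) =
      if ∑ j, β j = 0 then (((1/2) * ∑ j, β j * (β j / σ j) : ℝ) : EReal) else ⊤ :=
  stmt2_general k f σ hσ g q hq α β hβ
end

section
/- Let F(d) := ℓ(f⁰ − J d) + (μ/2)‖d‖² where ℓ : ℝ^k → ℝ is convex and differentiable, J : ℝ^p → ℝ^k is linear, f⁰ ∈ ℝ^k, and μ > 0. Let d* be the unique minimizer of F. If d* ≠ 0 then ⟨J^* ∇ℓ(f⁰), d*⟩ > 0, i.e., −d* is a descent direction for the composition w ↦ ℓ(f⁰ − J w) at w = 0 (equivalently for ℓ∘f at the linearization point). -/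
open scoped RealInnerProductSpace

/-
Comparing the minimizer with `d = 0` gives `ℓ(f⁰ − J d*) + (μ/2)‖d*‖² ≤ ℓ(f⁰)`, while the
first-order characterization of convexity gives `ℓ(f⁰) − ⟪∇ℓ(f⁰), J d*⟫ ≤ ℓ(f⁰ − J d*)`.
Together, `⟪J* ∇ℓ(f⁰), d*⟫ ≥ (μ/2)‖d*‖² > 0`.
-/

open Set

theorem ConvexOn.apply_add_fderiv_le {E : Type*} [NormedAddCommGroup E] [NormedSpace ℝ E] {s : Set E} {f : E → ℝ} {f' : E →L[ℝ] ℝ} {x v : E}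
    (hf : ConvexOn ℝ s f) (hx : x ∈ s) (hxv : x + v ∈ s) (hfx : HasFDerivAt f f' x) :
    f x + f' v ≤ f (x + v) := by
  let φ : ℝ → ℝ := fun t => f (x + t • v)
  have hφ_eq : f ∘ AffineMap.lineMap x (x + v) = φ := by
    funext t
    simp only [Function.comp, AffineMap.lineMap_apply, vadd_eq_add, vsub_eq_sub,
      add_sub_cancel_left, φ, add_comm]
  have hseg : Icc (0 : ℝ) 1 ⊆ AffineMap.lineMap x (x + v) ⁻¹' s := fun t ht =>
    hf.1.lineMap_mem hx hxv ht
  have hφ_conv : ConvexOn ℝ (Icc 0 1) φ :=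
    hφ_eq ▸ (hf.comp_affineMap _).subset hseg (convex_Icc 0 1)
  have hline : HasDerivAt (fun t : ℝ => x + t • v) v 0 := by
    simpa using ((hasDerivAt_id (0 : ℝ)).smul_const v).const_add x
  have hφ_deriv : HasDerivAt φ (f' v) 0 :=
    (by simpa using hfx : HasFDerivAt f f' (x + (0 : ℝ) • v)).comp_hasDerivAt 0 hline
  have hslope := hφ_conv.le_slope_of_hasDerivAt (left_mem_Icc.2 zero_le_one)
    (right_mem_Icc.2 zero_le_one) one_pos hφ_deriv
  simp only [slope_def_field, φ, one_smul, zero_smul, add_zero, sub_zero, div_one] at hslope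
  linarith

theorem ConvexOn.apply_add_inner_gradient_le {E : Type*} [NormedAddCommGroup E]
    [InnerProductSpace ℝ E] [CompleteSpace E] {s : Set E} {f : E → ℝ} {g x v : E}
    (hf : ConvexOn ℝ s f) (hx : x ∈ s) (hxv : x + v ∈ s) (hfx : HasGradientAt f g x) :
    f x + ⟪g, v⟫ ≤ f (x + v) :=
  hf.apply_add_fderiv_le hx hxv hfx

theorem half_mul_norm_sq_le_inner_adjoint_gradient_of_isMinOn {E G : Type*}
    [NormedAddCommGroup E] [InnerProductSpace ℝ E] [CompleteSpace E]
    [NormedAddCommGroup G] [InnerProductSpace ℝ G] [CompleteSpace G]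
    {ℓ : G → ℝ} (hℓ : ConvexOn ℝ univ ℓ) {f0 : G} (hℓf0 : DifferentiableAt ℝ ℓ f0)
    {J : E →L[ℝ] G} {μ : ℝ} {d : E}
    (hd : IsMinOn (fun w => ℓ (f0 - J w) + (μ / 2) * ‖w‖ ^ 2) univ d) :
    (μ / 2) * ‖d‖ ^ 2 ≤ ⟪J.adjoint (gradient ℓ f0), d⟫ := by
  have hmin : ℓ (f0 - J d) + (μ / 2) * ‖d‖ ^ 2 ≤ ℓ f0 := by
    simpa using hd (mem_univ 0)
  have htangent : ℓ f0 + ⟪gradient ℓ f0, -J d⟫ ≤ ℓ (f0 - J d) := by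
    simpa [← sub_eq_add_neg] using
      hℓ.apply_add_inner_gradient_le (mem_univ f0) (mem_univ _) hℓf0.hasGradientAt (v := -J d)
  rw [ContinuousLinearMap.adjoint_inner_left]
  rw [inner_neg_right] at htangent
  linarith

/-- if `d*` is the minimizer of
`F(d) = ℓ(f⁰ − J d) + (μ/2)‖d‖²` with `ℓ` convex differentiable and `μ > 0`,
and `d* ≠ 0`, then `⟨J* ∇ℓ(f⁰), d*⟩ > 0`, i.e. `−d*` is a descent direction. -/
theorem stmt4 (p k : ℕ) (μ : ℝ) (hμ : 0 < μ)
    (ℓ : EuclideanSpace ℝ (Fin k) → ℝ)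
    (hℓconv : ConvexOn ℝ Set.univ ℓ)
    (hℓdiff : Differentiable ℝ ℓ)
    (J : EuclideanSpace ℝ (Fin p) →L[ℝ] EuclideanSpace ℝ (Fin k))
    (f0 : EuclideanSpace ℝ (Fin k))
    (F : EuclideanSpace ℝ (Fin p) → ℝ)
    (hF : ∀ d, F d = ℓ (f0 - J d) + (μ / 2) * ‖d‖ ^ 2)
    (dstar : EuclideanSpace ℝ (Fin p))
    (hdstar : IsMinOn F Set.univ dstar)
    (hne : dstar ≠ 0) :
    0 < ⟪J.adjoint (gradient ℓ f0), dstar⟫ := by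
  rw [funext hF] at hdstar
  have hpos : 0 < (μ / 2) * ‖dstar‖ ^ 2 := by
    have := norm_pos_iff.2 hne
    positivity
  exact hpos.trans_le
    (half_mul_norm_sq_le_inner_adjoint_gradient_of_isMinOn hℓconv (hℓdiff f0) hdstar)
end

section
/- Let Q ∈ ℝ^{p×p} be symmetric positive definite and c ∈ ℝ^p. Consider the conjugate gradient iteration initialized at x⁰ = 0, r⁰ = p⁰ = c, with a^τ = ⟨r^{τ−1}, r^{τ−1}⟩/⟨p^{τ−1}, Q p^{τ−1}⟩, x^τ = x^{τ−1} + a^τ p^{τ−1}, r^τ = r^{τ−1} − a^τ Q p^{τ−1}, b^τ = ⟨r^τ, r^τ⟩/⟨r^{τ−1}, r^{τ−1}⟩, p^τ = r^τ + b^τ p^{τ−1}. Then for every τ ≥ 0, ⟨p^τ, c⟩ ≥ 0 and ⟨x^τ, c⟩ ≥ 0. -/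
open scoped BigOperators
open Matrix

/-!
The residuals of conjugate gradient are orthogonal to all earlier search directions, and
the directions are mutually `Q`-conjugate; both facts are proved together by induction, the
positivity of `⟨pᵗ, Q pᵗ⟩` coming from `⟨rᵗ, pᵗ⟩ = ⟨rᵗ, rᵗ⟩ ≠ 0`. Since `p⁰ = c`, every
later residual is orthogonal to `c`, so `⟨pᵗ⁺¹, c⟩ = bᵗ⁺¹ ⟨pᵗ, c⟩` and
`⟨xᵗ⁺¹, c⟩ = ⟨xᵗ, c⟩ + aᵗ⁺¹ ⟨pᵗ, c⟩`, with step sizes `a, b ≥ 0`.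
-/

theorem Matrix.IsSymm.mulVec_dotProduct {m R : Type*} [Fintype m] [CommSemiring R]
    {A : Matrix m m R} (hA : A.IsSymm) (v w : m → R) : A *ᵥ v ⬝ᵥ w = v ⬝ᵥ A *ᵥ w := by
  rw [dotProduct_mulVec, ← mulVec_transpose, hA.eq]

structure IsConjGrad {m : Type*} [Fintype m] (Q : Matrix m m ℝ) (c : m → ℝ)
    (x r p : ℕ → m → ℝ) (a b : ℕ → ℝ) : Prop where
  x_zero : x 0 = 0
  r_zero : r 0 = c
  p_zero : p 0 = c
  a_succ : ∀ τ, a (τ + 1) = (r τ ⬝ᵥ r τ) / (p τ ⬝ᵥ Q *ᵥ p τ)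
  x_succ : ∀ τ, x (τ + 1) = x τ + a (τ + 1) • p τ
  r_succ : ∀ τ, r (τ + 1) = r τ - a (τ + 1) • Q *ᵥ p τ
  b_succ : ∀ τ, b (τ + 1) = (r (τ + 1) ⬝ᵥ r (τ + 1)) / (r τ ⬝ᵥ r τ)
  p_succ : ∀ τ, p (τ + 1) = r (τ + 1) + b (τ + 1) • p τ

namespace IsConjGrad

variable {m : Type*} [Fintype m] {Q : Matrix m m ℝ} {c : m → ℝ} {x r p : ℕ → m → ℝ}
  {a b : ℕ → ℝ}

theorem a_nonneg (cg : IsConjGrad Q c x r p a b) (hQ : Q.PosSemidef) (τ : ℕ) :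
    0 ≤ a (τ + 1) := by
  rw [cg.a_succ]
  exact div_nonneg (dotProduct_self_star_nonneg _) (hQ.dotProduct_mulVec_nonneg _)

theorem b_nonneg (cg : IsConjGrad Q c x r p a b) (τ : ℕ) : 0 ≤ b (τ + 1) := by
  rw [cg.b_succ]
  exact div_nonneg (dotProduct_self_star_nonneg _) (dotProduct_self_star_nonneg _)

theorem smul_mulVec_p (cg : IsConjGrad Q c x r p a b) (τ : ℕ) :
    a (τ + 1) • Q *ᵥ p τ = r τ - r (τ + 1) := by
  rw [cg.r_succ, sub_sub_cancel]

theorem r_dotProduct_p_self (cg : IsConjGrad Q c x r p a b) {τ : ℕ}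
    (horth : ∀ i < τ, r τ ⬝ᵥ p i = 0) : r τ ⬝ᵥ p τ = r τ ⬝ᵥ r τ := by
  cases τ with
  | zero => rw [cg.r_zero, cg.p_zero]
  | succ τ => rw [cg.p_succ, dotProduct_add, dotProduct_smul, horth τ τ.lt_succ_self,
      smul_zero, add_zero]

theorem a_pos (cg : IsConjGrad Q c x r p a b) (hQ : Q.PosDef) {τ : ℕ}
    (hr : r τ ⬝ᵥ r τ ≠ 0) (horth : ∀ i < τ, r τ ⬝ᵥ p i = 0) : 0 < a (τ + 1) := by
  have hp : p τ ≠ 0 := by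
    rintro h
    apply hr
    rw [← cg.r_dotProduct_p_self horth, h, dotProduct_zero]
  rw [cg.a_succ]
  exact div_pos ((dotProduct_self_star_nonneg _).lt_of_ne' hr)
    (by simpa using hQ.dotProduct_mulVec_pos hp)

theorem dotProduct_r_eq_zero (cg : IsConjGrad Q c x r p a b) {v : m → ℝ} {i : ℕ}
    (hv : ∀ j ≤ i, v ⬝ᵥ p j = 0) : v ⬝ᵥ r i = 0 := by
  cases i with
  | zero => rw [cg.r_zero, ← cg.p_zero, hv 0 le_rfl]
  | succ i =>
    rw [eq_sub_of_add_eq (cg.p_succ i).symm, dotProduct_sub, dotProduct_smul,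
      hv (i + 1) le_rfl, hv i i.le_succ, smul_zero, sub_zero]

theorem r_succ_dotProduct_p (cg : IsConjGrad Q c x r p a b) (hQ : Q.IsSymm) {τ : ℕ}
    (ha : a (τ + 1) ≠ 0) (horth : ∀ i < τ, r τ ⬝ᵥ p i = 0)
    (hconj : ∀ i < τ, p τ ⬝ᵥ Q *ᵥ p i = 0) : ∀ i ≤ τ, r (τ + 1) ⬝ᵥ p i = 0 := by
  intro i hi
  rw [cg.r_succ, sub_dotProduct, smul_dotProduct]
  rcases hi.lt_or_eq with hi | rfl
  · rw [horth i hi, hQ.mulVec_dotProduct, hconj i hi, smul_zero, sub_zero]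
  · have hpQp : p i ⬝ᵥ Q *ᵥ p i ≠ 0 := fun h ↦ ha (by rw [cg.a_succ, h, div_zero])
    rw [cg.r_dotProduct_p_self horth, dotProduct_comm (Q *ᵥ p i), cg.a_succ, smul_eq_mul,
      div_mul_cancel₀ _ hpQp, sub_self]

theorem p_succ_dotProduct_mulVec_p (cg : IsConjGrad Q c x r p a b) {τ : ℕ}
    (ha : ∀ i ≤ τ, a (i + 1) ≠ 0) (horth : ∀ i ≤ τ, r (τ + 1) ⬝ᵥ p i = 0)
    (hconj : ∀ i < τ, p τ ⬝ᵥ Q *ᵥ p i = 0) : ∀ i ≤ τ, p (τ + 1) ⬝ᵥ Q *ᵥ p i = 0 := by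
  have hrr : ∀ i ≤ τ, r (τ + 1) ⬝ᵥ r i = 0 := fun i hi ↦
    cg.dotProduct_r_eq_zero fun j hj ↦ horth j (hj.trans hi)
  intro i hi
  -- `aⁱ⁺¹ Q pⁱ = rⁱ - rⁱ⁺¹` turns conjugacy against `pⁱ` into orthogonality to residuals.
  apply (mul_eq_zero.mp _).resolve_left (ha i hi)
  rw [← smul_eq_mul, ← dotProduct_smul, cg.smul_mulVec_p, cg.p_succ, add_dotProduct,
    dotProduct_sub, smul_dotProduct, hrr i hi]
  rcases hi.lt_or_eq with hi | rfl
  · rw [hrr (i + 1) hi, ← cg.smul_mulVec_p, dotProduct_smul, hconj i hi]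
    simp
  · have hpQp : p i ⬝ᵥ Q *ᵥ p i ≠ 0 := fun h ↦ ha i le_rfl (by rw [cg.a_succ, h, div_zero])
    have hr : r i ⬝ᵥ r i ≠ 0 := fun h ↦ ha i le_rfl (by rw [cg.a_succ, h, zero_div])
    rw [← cg.smul_mulVec_p, dotProduct_smul, cg.a_succ, cg.b_succ, smul_eq_mul, smul_eq_mul]
    field_simp
    ring

theorem orthogonal (cg : IsConjGrad Q c x r p a b) (hQ : Q.PosDef)
    (hr : ∀ τ, r τ ⬝ᵥ r τ ≠ 0) (τ : ℕ) :
    ∀ i < τ, r τ ⬝ᵥ p i = 0 ∧ p τ ⬝ᵥ Q *ᵥ p i = 0 := by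
  induction τ using Nat.strong_induction_on with
  | _ τ ih =>
  cases τ with
  | zero => simp
  | succ τ =>
    have ha : ∀ i ≤ τ, a (i + 1) ≠ 0 := fun i hi ↦
      (cg.a_pos hQ (hr i) fun j hj ↦ (ih i (by omega) j hj).1).ne'
    have horth := cg.r_succ_dotProduct_p (isHermitian_iff_isSymm.mp hQ.isHermitian)
      (ha τ le_rfl) (fun i hi ↦ (ih τ τ.lt_succ_self i hi).1)
      (fun i hi ↦ (ih τ τ.lt_succ_self i hi).2)
    have hconj := cg.p_succ_dotProduct_mulVec_p ha horth
      (fun i hi ↦ (ih τ τ.lt_succ_self i hi).2)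
    exact fun i hi ↦ ⟨horth i (by omega), hconj i (by omega)⟩

theorem r_succ_dotProduct_c (cg : IsConjGrad Q c x r p a b) (hQ : Q.PosDef)
    (hr : ∀ τ, r τ ⬝ᵥ r τ ≠ 0) (τ : ℕ) : r (τ + 1) ⬝ᵥ c = 0 :=
  cg.p_zero ▸ (cg.orthogonal hQ hr (τ + 1) 0 τ.succ_pos).1

theorem p_dotProduct_c_nonneg (cg : IsConjGrad Q c x r p a b) (hQ : Q.PosDef)
    (hr : ∀ τ, r τ ⬝ᵥ r τ ≠ 0) (τ : ℕ) : 0 ≤ p τ ⬝ᵥ c := by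
  induction τ with
  | zero => rw [cg.p_zero]; exact dotProduct_self_star_nonneg c
  | succ τ ih =>
    rw [cg.p_succ, add_dotProduct, smul_dotProduct, cg.r_succ_dotProduct_c hQ hr, zero_add]
    exact mul_nonneg (cg.b_nonneg τ) ih

theorem x_dotProduct_c_nonneg (cg : IsConjGrad Q c x r p a b) (hQ : Q.PosDef)
    (hr : ∀ τ, r τ ⬝ᵥ r τ ≠ 0) (τ : ℕ) : 0 ≤ x τ ⬝ᵥ c := by
  induction τ with
  | zero => rw [cg.x_zero, zero_dotProduct]
  | succ τ ih =>
    rw [cg.x_succ, add_dotProduct, smul_dotProduct]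
    exact add_nonneg ih (mul_nonneg (cg.a_nonneg hQ.posSemidef τ)
      (cg.p_dotProduct_c_nonneg hQ hr τ))

end IsConjGrad

theorem stmt5_general (n : ℕ) (Q : Matrix (Fin n) (Fin n) ℝ) (hQ : Q.PosDef)
    (c : Fin n → ℝ)
    (x r p : ℕ → (Fin n → ℝ)) (a b : ℕ → ℝ)
    (hx0 : x 0 = 0) (hr0 : r 0 = c) (hp0 : p 0 = c)
    (hden2 : ∀ τ, r τ ⬝ᵥ r τ ≠ 0)
    (ha : ∀ τ, a (τ + 1) = (r τ ⬝ᵥ r τ) / (p τ ⬝ᵥ Q.mulVec (p τ)))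
    (hx : ∀ τ, x (τ + 1) = x τ + a (τ + 1) • p τ)
    (hr : ∀ τ, r (τ + 1) = r τ - a (τ + 1) • Q.mulVec (p τ))
    (hb : ∀ τ, b (τ + 1) = (r (τ + 1) ⬝ᵥ r (τ + 1)) / (r τ ⬝ᵥ r τ))
    (hp : ∀ τ, p (τ + 1) = r (τ + 1) + b (τ + 1) • p τ) :
    ∀ τ, 0 ≤ p τ ⬝ᵥ c ∧ 0 ≤ x τ ⬝ᵥ c := by
  have cg : IsConjGrad Q c x r p a b := ⟨hx0, hr0, hp0, ha, hx, hr, hb, hp⟩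
  exact fun τ ↦ ⟨cg.p_dotProduct_c_nonneg hQ hden2 τ, cg.x_dotProduct_c_nonneg hQ hden2 τ⟩

/-- conjugate gradient started at `x⁰ = 0`, `r⁰ = p⁰ = c` for
`Q` symmetric positive definite produces iterates with `⟨pᵗ, c⟩ ≥ 0` and
`⟨xᵗ, c⟩ ≥ 0` for every `τ ≥ 0` (assuming nonzero denominators). -/
theorem stmt5 (n : ℕ) (Q : Matrix (Fin n) (Fin n) ℝ) (hQ : Q.PosDef)
    (c : Fin n → ℝ)
    (x r p : ℕ → (Fin n → ℝ)) (a b : ℕ → ℝ)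
    (hx0 : x 0 = 0) (hr0 : r 0 = c) (hp0 : p 0 = c)
    (hden1 : ∀ τ, p τ ⬝ᵥ Q.mulVec (p τ) ≠ 0)
    (hden2 : ∀ τ, r τ ⬝ᵥ r τ ≠ 0)
    (ha : ∀ τ, a (τ + 1) = (r τ ⬝ᵥ r τ) / (p τ ⬝ᵥ Q.mulVec (p τ)))
    (hx : ∀ τ, x (τ + 1) = x τ + a (τ + 1) • p τ)
    (hr : ∀ τ, r (τ + 1) = r τ - a (τ + 1) • Q.mulVec (p τ))
    (hb : ∀ τ, b (τ + 1) = (r (τ + 1) ⬝ᵥ r (τ + 1)) / (r τ ⬝ᵥ r τ))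
    (hp : ∀ τ, p (τ + 1) = r (τ + 1) + b (τ + 1) • p τ) :
    ∀ τ, 0 ≤ p τ ⬝ᵥ c ∧ 0 ≤ x τ ⬝ᵥ c :=
  stmt5_general n Q hQ c x r p a b hx0 hr0 hp0 hden2 ha hx hr hb hp
end
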